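/- Let S be a 7-progression-free subset of F_7^2. If |S| = 35 then the number of affine lines ℓ of F_7^2 with |ℓ ∩ S| = 6 is at most 33; if |S| = 34 then this number is at most 30; and if |S| = 33 then this number is at most 28. -/

import Mathlib

/-- A subset `S` of `F_p^n` is `k`-progression-free if there are no `a, d` with `d ≠ 0`
such that `a + i • d ∈ S` for all `i ∈ {0, …, k-1}`. -/
def ProgFree (p n k : ℕ) (S : Finset (Fin n → ZMod p)) : Prop :=
  ¬ ∃ a d : Fin n → ZMod p, d ≠ 0 ∧ ∀ i : ℕ, i < k → a + (i : ZMod p) • d ∈ S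

/-- An affine line of `F_7^2`, as a finite set of points. -/
def IsLine (L : Finset (Fin 2 → ZMod 7)) : Prop :=
  ∃ a d : Fin 2 → ZMod 7, d ≠ 0 ∧
    L = Finset.image (fun t : ZMod 7 => a + t • d) Finset.univ

/-!
A line meets `S` in six points iff it meets the complement `T` in exactly one. Every point of
`F_7²` lies on 8 of the 56 lines and two points on exactly one, so the intersection sizes
`r_L = #(L ∩ T)` satisfy `∑ r_L = 8 #T` and `∑ r_L (r_L - 1) = #T (#T - 1)`. A line with `r_L = 1`
contributes 4 to `∑ (r_L - 3)² = #T² - 41 #T + 504`, and for `#T = 14, 15, 16` this leaves room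
for at most 31, 28 and 26 such lines.
-/

open Finset

section DoubleCounting

lemma card_offDiag_add_card {α : Type*} (s : Finset α) : #s.offDiag + #s = #s ^ 2 := by
  rw [offDiag_card, sq, Nat.sub_add_cancel (Nat.le_mul_self _)]

variable {α : Type*} [DecidableEq α] {B : Finset (Finset α)} {T : Finset α} {r : ℕ}

lemma sum_card_offDiag_inter (h : ∀ x ∈ T, ∀ y ∈ T, x ≠ y → #{L ∈ B | x ∈ L ∧ y ∈ L} = 1) :
    ∑ L ∈ B, #(T ∩ L).offDiag = #T.offDiag := by
  have h_offDiag (L : Finset α) : (T ∩ L).offDiag = {q ∈ T.offDiag | q.1 ∈ L ∧ q.2 ∈ L} := by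
    ext ⟨x, y⟩
    simp only [mem_offDiag, mem_inter, mem_filter]
    tauto
  simp_rw [h_offDiag, card_filter]
  rw [sum_comm, card_eq_sum_ones]
  refine sum_congr rfl fun q hq ↦ ?_
  obtain ⟨hx, hy, hxy⟩ := mem_offDiag.mp hq
  rw [← card_filter, h q.1 hx q.2 hy hxy]

lemma sum_sq_card_inter_add_card (hr : ∀ x ∈ T, #{L ∈ B | x ∈ L} = r)
    (h : ∀ x ∈ T, ∀ y ∈ T, x ≠ y → #{L ∈ B | x ∈ L ∧ y ∈ L} = 1) :
    ∑ L ∈ B, #(T ∩ L) ^ 2 + #T = #T ^ 2 + #T * r := by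
  simp_rw [← card_offDiag_add_card (T ∩ _)]
  rw [sum_add_distrib, sum_card_offDiag_inter h, sum_card_inter hr, ← card_offDiag_add_card T]
  ring

lemma four_mul_card_filter_eq_one_le {ι : Type*} (s : Finset ι) (f : ι → ℕ) :
    4 * (#{i ∈ s | f i = 1} : ℤ) ≤ ∑ i ∈ s, ((f i : ℤ) - 3) ^ 2 := by
  rw [card_filter, Nat.cast_sum, mul_sum]
  refine sum_le_sum fun i _ ↦ ?_
  split_ifs with hi
  · simp [hi]
  · simpa using sq_nonneg ((f i : ℤ) - 3)

theorem four_mul_card_filter_card_inter_eq_one_le (hr : ∀ x ∈ T, #{L ∈ B | x ∈ L} = r)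
    (h : ∀ x ∈ T, ∀ y ∈ T, x ≠ y → #{L ∈ B | x ∈ L ∧ y ∈ L} = 1) :
    4 * (#{L ∈ B | #(T ∩ L) = 1} : ℤ) ≤ (#T : ℤ) ^ 2 - (5 * r + 1) * #T + 9 * #B := by
  have h_sum : ∑ L ∈ B, (#(T ∩ L) : ℤ) = #T * r := by exact_mod_cast sum_card_inter hr
  have h_sum_sq : ∑ L ∈ B, (#(T ∩ L) : ℤ) ^ 2 + #T = #T ^ 2 + #T * r := by
    simpa using congrArg (Nat.cast (R := ℤ)) (sum_sq_card_inter_add_card hr h)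
  calc 4 * (#{L ∈ B | #(T ∩ L) = 1} : ℤ)
      ≤ ∑ L ∈ B, ((#(T ∩ L) : ℤ) - 3) ^ 2 := four_mul_card_filter_eq_one_le B _
    _ = ∑ L ∈ B, (#(T ∩ L) : ℤ) ^ 2 - 6 * ∑ L ∈ B, (#(T ∩ L) : ℤ) + 9 * #B := by
      simp_rw [sub_sq, sum_add_distrib, sum_sub_distrib, mul_sum, sum_const, nsmul_eq_mul]
      ring_nf
    _ = (#T : ℤ) ^ 2 - (5 * r + 1) * #T + 9 * #B := by linear_combination h_sum_sq - 6 * h_sum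

end DoubleCounting

namespace AffinePlane

variable (F : Type*) [Field F]

/-- `affineLine (e, c) = {x | lineForm e x = c}` is the line of slope `m` for `e = some m` and a
vertical line for `e = none`; this parametrizes the lines of `F²` bijectively. -/
def lineForm : Option F → (Fin 2 → F) →ₗ[F] F
  | none => LinearMap.proj 0
  | some m => LinearMap.proj 1 - m • LinearMap.proj 0

variable {F}

@[simp] lemma lineForm_none (x : Fin 2 → F) : lineForm F none x = x 0 := rfl

@[simp] lemma lineForm_some (m : F) (x : Fin 2 → F) : lineForm F (some m) x = x 1 - m * x 0 := rfl

lemma existsUnique_lineForm_eq_zero {z : Fin 2 → F} (hz : z ≠ 0) : ∃! e, lineForm F e z = 0 := by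
  by_cases hz₀ : z 0 = 0
  · have hz₁ : z 1 ≠ 0 := fun hz₁ ↦ hz (funext fun i ↦ by fin_cases i <;> assumption)
    refine ⟨none, hz₀, fun e he ↦ ?_⟩
    cases e with
    | none => rfl
    | some m => simp [hz₀, hz₁] at he
  · refine ⟨some (z 1 / z 0), by simp [hz₀], fun e he ↦ ?_⟩
    cases e with
    | none => exact absurd he hz₀
    | some m =>
      rw [lineForm_some, sub_eq_zero] at he
      rw [he, mul_div_cancel_right₀ _ hz₀]

variable [Fintype F] [DecidableEq F]

def affineLine (p : Option F × F) : Finset (Fin 2 → F) := {x | lineForm F p.1 x = p.2}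

@[simp] lemma mem_affineLine {p : Option F × F} {x : Fin 2 → F} :
    x ∈ affineLine p ↔ lineForm F p.1 x = p.2 := by
  simp [affineLine]

lemma card_filter_mem_affineLine (x : Fin 2 → F) :
    #{p : Option F × F | x ∈ affineLine p} = Fintype.card F + 1 := by
  rw [card_filter, Fintype.sum_prod_type]
  simp

lemma card_filter_mem_affineLine_and_mem {x y : Fin 2 → F} (hxy : x ≠ y) :
    #{p : Option F × F | x ∈ affineLine p ∧ y ∈ affineLine p} = 1 := by
  obtain ⟨e₀, he₀, huniq⟩ := existsUnique_lineForm_eq_zero (sub_ne_zero.mpr hxy)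
  rw [card_eq_one]
  refine ⟨(e₀, lineForm F e₀ x), ext fun ⟨e, c⟩ ↦ ?_⟩
  simp only [mem_filter, mem_univ, true_and, mem_affineLine, mem_singleton, Prod.mk.injEq]
  constructor
  · rintro ⟨rfl, hy⟩
    have he : e = e₀ := huniq e (by simp only [map_sub, hy, sub_self])
    exact ⟨he, he ▸ rfl⟩
  · rintro ⟨rfl, rfl⟩
    exact ⟨rfl, (sub_eq_zero.mp (by rwa [← map_sub])).symm⟩

lemma affineLine_eq_image (p : Option F × F) :
    ∃ a d : Fin 2 → F, d ≠ 0 ∧ affineLine p = univ.image fun t : F ↦ a + t • d := by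
  obtain ⟨e, c⟩ := p
  cases e with
  | none =>
    refine ⟨![c, 0], ![0, 1], fun h ↦ by simpa using congrFun h 1, ext fun x ↦ ?_⟩
    simp only [mem_affineLine, lineForm_none, mem_image, mem_univ, true_and]
    constructor
    · rintro rfl
      exact ⟨x 1, funext fun i ↦ by fin_cases i <;> simp⟩
    · rintro ⟨t, rfl⟩
      simp
  | some m =>
    refine ⟨![0, c], ![1, m], fun h ↦ by simpa using congrFun h 0, ext fun x ↦ ?_⟩
    simp only [mem_affineLine, lineForm_some, mem_image, mem_univ, true_and]
    constructor
    · intro hx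
      refine ⟨x 0, funext fun i ↦ ?_⟩
      fin_cases i
      · simp
      · simp [← hx, mul_comm]
    · rintro ⟨t, rfl⟩
      simp [mul_comm]

lemma card_image_add_smul {a d : Fin 2 → F} (hd : d ≠ 0) :
    #(univ.image fun t : F ↦ a + t • d) = Fintype.card F :=
  card_image_of_injective _ ((add_right_injective a).comp (smul_left_injective F hd))

lemma card_affineLine (p : Option F × F) : #(affineLine p) = Fintype.card F := by
  obtain ⟨a, d, hd, hp⟩ := affineLine_eq_image p
  rw [hp, card_image_add_smul hd]

lemma exists_affineLine_eq_image {a d : Fin 2 → F} (hd : d ≠ 0) :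
    ∃ p, affineLine p = univ.image fun t : F ↦ a + t • d := by
  obtain ⟨e, he, -⟩ := existsUnique_lineForm_eq_zero hd
  refine ⟨(e, lineForm F e a), (eq_of_subset_of_card_le ?_ ?_).symm⟩
  · intro x hx
    obtain ⟨t, -, rfl⟩ := mem_image.mp hx
    simp [he]
  · rw [card_affineLine, card_image_add_smul hd]

lemma affineLine_injective : Function.Injective (affineLine (F := F)) := by
  intro p q hpq
  obtain ⟨x, hx, y, hy, hxy⟩ := one_lt_card.mp <| (card_affineLine p).symm ▸ Fintype.one_lt_card
  exact card_le_one.mp (card_filter_mem_affineLine_and_mem hxy).le p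
    (mem_filter.mpr ⟨mem_univ _, hx, hy⟩) q (mem_filter.mpr ⟨mem_univ _, hpq ▸ hx, hpq ▸ hy⟩)

variable (F) in
def affineLines : Finset (Finset (Fin 2 → F)) := univ.image affineLine

lemma card_affineLines : #(affineLines F) = (Fintype.card F + 1) * Fintype.card F := by
  simp [affineLines, card_image_of_injective _ affineLine_injective]

lemma card_filter_affineLines_mem (x : Fin 2 → F) :
    #{L ∈ affineLines F | x ∈ L} = Fintype.card F + 1 := by
  rw [affineLines, filter_image, card_image_of_injective _ affineLine_injective,
    card_filter_mem_affineLine]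

lemma card_filter_affineLines_mem_and_mem {x y : Fin 2 → F} (hxy : x ≠ y) :
    #{L ∈ affineLines F | x ∈ L ∧ y ∈ L} = 1 := by
  rw [affineLines, filter_image, card_image_of_injective _ affineLine_injective,
    card_filter_mem_affineLine_and_mem hxy]

theorem four_mul_card_affineLines_inter_eq_one_le (T : Finset (Fin 2 → F)) :
    4 * (#{L ∈ affineLines F | #(T ∩ L) = 1} : ℤ) ≤
      (#T : ℤ) ^ 2 - (5 * Fintype.card F + 6) * #T + 9 * (Fintype.card F + 1) * Fintype.card F := by
  have := four_mul_card_filter_card_inter_eq_one_le (B := affineLines F) (T := T)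
    (fun x _ ↦ card_filter_affineLines_mem x)
    (fun x _ y _ hxy ↦ card_filter_affineLines_mem_and_mem hxy)
  push_cast [card_affineLines] at this
  linarith

end AffinePlane

open AffinePlane

instance : Fact (Nat.Prime 7) := ⟨by norm_num⟩

lemma isLine_iff_mem_affineLines {L : Finset (Fin 2 → ZMod 7)} :
    IsLine L ↔ L ∈ affineLines (ZMod 7) := by
  simp only [IsLine, affineLines, mem_image, mem_univ, true_and]
  constructor
  · rintro ⟨a, d, hd, rfl⟩
    exact exists_affineLine_eq_image hd
  · rintro ⟨p, rfl⟩
    exact affineLine_eq_image p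

lemma card_inter_eq_six_iff {L : Finset (Fin 2 → ZMod 7)} (hL : L ∈ affineLines (ZMod 7))
    (S : Finset (Fin 2 → ZMod 7)) : #(L ∩ S) = 6 ↔ #(Sᶜ ∩ L) = 1 := by
  obtain ⟨p, -, rfl⟩ := mem_image.mp hL
  have := card_inter_add_card_sdiff (affineLine p) S
  rw [card_affineLine, ZMod.card] at this
  rw [inter_comm Sᶜ, ← sdiff_eq_inter_compl]
  omega

theorem stmt_12_general (S : Finset (Fin 2 → ZMod 7)) :
    (S.card = 35 →
      {L : Finset (Fin 2 → ZMod 7) | IsLine L ∧ (L ∩ S).card = 6}.ncard ≤ 33) ∧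
    (S.card = 34 →
      {L : Finset (Fin 2 → ZMod 7) | IsLine L ∧ (L ∩ S).card = 6}.ncard ≤ 30) ∧
    (S.card = 33 →
      {L : Finset (Fin 2 → ZMod 7) | IsLine L ∧ (L ∩ S).card = 6}.ncard ≤ 28) := by
  have h_lines : {L : Finset (Fin 2 → ZMod 7) | IsLine L ∧ #(L ∩ S) = 6} =
      ↑{L ∈ affineLines (ZMod 7) | #(Sᶜ ∩ L) = 1} := by
    ext L
    rw [Set.mem_ofPred_eq, coe_filter, Set.mem_ofPred_eq, isLine_iff_mem_affineLines]
    exact and_congr_right (card_inter_eq_six_iff · S)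
  have h_bound := four_mul_card_affineLines_inter_eq_one_le Sᶜ
  simp only [card_compl, Fintype.card_pi, ZMod.card, prod_const, card_univ, Fintype.card_fin]
    at h_bound
  rw [h_lines, Set.ncard_coe_finset]
  refine ⟨fun hS ↦ ?_, fun hS ↦ ?_, fun hS ↦ ?_⟩ <;> rw [hS] at h_bound <;> norm_num at h_bound <;>
    omega

theorem stmt_12 (S : Finset (Fin 2 → ZMod 7)) (hS : ProgFree 7 2 7 S) :
    (S.card = 35 →
      {L : Finset (Fin 2 → ZMod 7) | IsLine L ∧ (L ∩ S).card = 6}.ncard ≤ 33) ∧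
    (S.card = 34 →
      {L : Finset (Fin 2 → ZMod 7) | IsLine L ∧ (L ∩ S).card = 6}.ncard ≤ 30) ∧
    (S.card = 33 →
      {L : Finset (Fin 2 → ZMod 7) | IsLine L ∧ (L ∩ S).card = 6}.ncard ≤ 28) :=
  stmt_12_general S
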